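/- arXiv:1806.01888 — 4 statements merged into one kernel-verified Lean document; each statement's English description precedes it below -/
import Mathlib

section
/- Let θ₀ ∈ ℝ^p with ‖θ₀‖₁ ≤ K (dense model condition), let θ̂ ∈ ℝ^p satisfy ‖θ̂ − θ₀‖_∞ ≤ λ, and let θ̃ be the soft-thresholded estimator θ̃ⱼ = (|θ̂ⱼ| − λ)₊ sign(θ̂ⱼ). Then for any q ≥ 1, ‖θ̃ − θ₀‖_q ≤ 2 K^{1/q} λ^{1−1/q}. -/
/-!
Write `v = θ̃ - θ₀`. Coordinatewise, soft-thresholding moves `θ̂ⱼ` by at most `λ` and shrinks it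
to at most `|θ̂ⱼ| - λ ≤ |θ₀ⱼ|` in absolute value, so `|vⱼ| ≤ 2λ` and `|vⱼ| ≤ 2|θ₀ⱼ|`; hence
`‖v‖_∞ ≤ 2λ` and `‖v‖₁ ≤ 2K`. The interpolation `‖v‖_q^q ≤ ‖v‖₁ ‖v‖_∞^{q-1}` then gives
`‖v‖_q ≤ (2K)^{1/q} (2λ)^{1-1/q} = 2 K^{1/q} λ^{1-1/q}`.
-/

/-- Soft-thresholding of a scalar: `(|x| - λ)₊ · sign(x)`. -/
noncomputable def softThreshold (lam x : ℝ) : ℝ := max (|x| - lam) 0 * Real.sign x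

open Finset

theorem abs_softThreshold_sub_self_le {lam : ℝ} (hlam : 0 ≤ lam) (x : ℝ) :
    |softThreshold lam x - x| ≤ lam := by
  unfold softThreshold
  rcases lt_trichotomy x 0 with hx | rfl | hx
  · rw [Real.sign_of_neg hx, abs_of_neg hx, abs_le]
    constructor <;> cases max_cases (-x - lam) 0 <;> linarith
  · simpa using hlam
  · rw [Real.sign_of_pos hx, abs_of_pos hx, abs_le]
    constructor <;> cases max_cases (x - lam) 0 <;> linarith

theorem abs_softThreshold_le (lam x : ℝ) : |softThreshold lam x| ≤ max (|x| - lam) 0 := by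
  have hsign : |Real.sign x| ≤ 1 := by
    rcases Real.sign_apply_eq x with h | h | h <;> simp [h]
  rw [softThreshold, abs_mul, abs_of_nonneg (le_max_right _ _)]
  exact mul_le_of_le_one_right (le_max_right _ _) hsign

section Coordinate

variable {lam x y : ℝ}

theorem abs_softThreshold_sub_le_two_mul (hlam : 0 ≤ lam) (h : |x - y| ≤ lam) :
    |softThreshold lam x - y| ≤ 2 * lam :=
  calc |softThreshold lam x - y| = |(softThreshold lam x - x) + (x - y)| := by ring_nf
    _ ≤ |softThreshold lam x - x| + |x - y| := abs_add_le _ _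
    _ ≤ 2 * lam := by linarith [abs_softThreshold_sub_self_le hlam x]

theorem abs_softThreshold_sub_le_two_mul_abs (h : |x - y| ≤ lam) :
    |softThreshold lam x - y| ≤ 2 * |y| := by
  have hx : |x| - lam ≤ |y| := by linarith [abs_sub_abs_le_abs_sub x y]
  have hst : |softThreshold lam x| ≤ |y| :=
    (abs_softThreshold_le lam x).trans (max_le hx (abs_nonneg y))
  linarith [abs_sub (softThreshold lam x) y]

end Coordinate

section Interpolation

variable {ι : Type*} (s : Finset ι) (v : ι → ℝ) {q : ℝ}

theorem abs_rpow_le_mul_rpow_sub_one {a M : ℝ} (hq : 1 ≤ q) (ha : |a| ≤ M) :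
    |a| ^ q ≤ |a| * M ^ (q - 1) :=
  calc |a| ^ q = |a| ^ (1 + (q - 1)) := by rw [add_sub_cancel]
    _ = |a| * |a| ^ (q - 1) := by
      rw [Real.rpow_add' (abs_nonneg a) (by linarith), Real.rpow_one]
    _ ≤ |a| * M ^ (q - 1) := by gcongr

theorem sum_abs_rpow_le_sum_abs_mul_rpow {M : ℝ} (hq : 1 ≤ q) (hv : ∀ j ∈ s, |v j| ≤ M) :
    ∑ j ∈ s, |v j| ^ q ≤ (∑ j ∈ s, |v j|) * M ^ (q - 1) := by
  rw [sum_mul]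
  exact sum_le_sum fun j hj => abs_rpow_le_mul_rpow_sub_one hq (hv j hj)

theorem sum_abs_rpow_rpow_inv_le {A B : ℝ} (hq : 1 ≤ q) (hB : 0 ≤ B)
    (hA : ∑ j ∈ s, |v j| ≤ A) (hv : ∀ j ∈ s, |v j| ≤ B) :
    (∑ j ∈ s, |v j| ^ q) ^ (1 / q) ≤ A ^ (1 / q) * B ^ (1 - 1 / q) := by
  have hq0 : q ≠ 0 := (by linarith : 0 < q).ne'
  have hA0 : 0 ≤ A := (sum_nonneg fun j _ => abs_nonneg (v j)).trans hA
  calc (∑ j ∈ s, |v j| ^ q) ^ (1 / q) ≤ (A * B ^ (q - 1)) ^ (1 / q) := by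
        gcongr
        exact (sum_abs_rpow_le_sum_abs_mul_rpow s v hq hv).trans (by gcongr)
    _ = A ^ (1 / q) * B ^ (1 - 1 / q) := by
        rw [Real.mul_rpow hA0 (by positivity), ← Real.rpow_mul hB]
        congr 2
        field_simp

end Interpolation

/-- Dense model bound: if `‖θ₀‖₁ ≤ K` and `‖θ̂ - θ₀‖_∞ ≤ λ`, then the soft-thresholded
estimator satisfies `‖θ̃ - θ₀‖_q ≤ 2 K^{1/q} λ^{1-1/q}` for any `q ≥ 1`. -/
theorem softThreshold_dense_model_bound
    (p : ℕ) (θhat θ₀ : Fin p → ℝ) (lam K q : ℝ) (hlam : 0 ≤ lam) (hq : 1 ≤ q)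
    (hK : ∑ j, |θ₀ j| ≤ K)
    (h : ‖θhat - θ₀‖ ≤ lam) :
    (∑ j, |softThreshold lam (θhat j) - θ₀ j| ^ q) ^ ((1 : ℝ) / q)
      ≤ 2 * K ^ ((1 : ℝ) / q) * lam ^ (1 - (1 : ℝ) / q) := by
  have hcoord : ∀ j, |θhat j - θ₀ j| ≤ lam := fun j =>
    (norm_le_pi_norm (θhat - θ₀) j).trans h
  have hsum : ∑ j, |softThreshold lam (θhat j) - θ₀ j| ≤ 2 * K :=
    calc ∑ j, |softThreshold lam (θhat j) - θ₀ j| ≤ ∑ j, 2 * |θ₀ j| :=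
          sum_le_sum fun j _ => abs_softThreshold_sub_le_two_mul_abs (hcoord j)
      _ ≤ 2 * K := by rw [← mul_sum]; linarith
  have hK0 : 0 ≤ K := (sum_nonneg fun j _ => abs_nonneg (θ₀ j)).trans hK
  calc _ ≤ (2 * K) ^ (1 / q) * (2 * lam) ^ (1 - 1 / q) :=
        sum_abs_rpow_rpow_inv_le _ _ hq (by positivity) hsum
          fun j _ => abs_softThreshold_sub_le_two_mul hlam (hcoord j)
    _ = 2 ^ (1 / q + (1 - 1 / q)) * K ^ (1 / q) * lam ^ (1 - 1 / q) := by
        rw [Real.mul_rpow zero_le_two hK0, Real.mul_rpow zero_le_two hlam,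
          Real.rpow_add zero_lt_two]
        ring
    _ = 2 * K ^ ((1 : ℝ) / q) * lam ^ (1 - (1 : ℝ) / q) := by
        rw [add_sub_cancel, Real.rpow_one]
end

section
/- Let g: Θ → ℝ^m with Θ ⊂ ℝ^p, and let θ₀ ∈ Θ satisfy g(θ₀) = 0. Let ĝ: Θ → ℝ^m be an empirical version. Fix λ, εₙ > 0 and suppose on an event E: (a) ‖ĝ(θ₀)‖_∞ ≤ λ (so a minimizer θ̂ of ‖θ‖₁ over {θ ∈ Θ : ‖ĝ(θ)‖_∞ ≤ λ} exists and satisfies ‖θ̂‖₁ ≤ ‖θ₀‖₁), and (b) sup over the restricted set R(θ₀) = {θ ∈ Θ : ‖θ‖₁ ≤ ‖θ₀‖₁} of ‖ĝ(θ) − g(θ)‖_∞ ≤ εₙ. Suppose moreover the identifiability condition: for all ε > 0, if θ ∈ R(θ₀) and ‖g(θ) − g(θ₀)‖_∞ ≤ ε then ‖θ − θ₀‖_ℓ ≤ r(ε) for a weakly increasing rate function r: [0,∞) → [0,∞). Then on the event E, ‖θ̂ − θ₀‖_ℓ ≤ r(λ + εₙ). -/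
/-- Deterministic core of the RMD estimator bound (Proposition 3.1 of the paper).
If `θ̂` minimizes `‖θ‖₁` over `{θ ∈ Θ : ‖ĝ(θ)‖_∞ ≤ λ}`, `‖ĝ(θ₀)‖_∞ ≤ λ`,
the empirical moments concentrate on the restricted set (`‖ĝ(θ) − g(θ)‖_∞ ≤ εₙ`),
and the identifiability condition holds with a weakly increasing rate function `r`,
then `‖θ̂ − θ₀‖_ℓ ≤ r(λ + εₙ)`. -/
theorem rmd_estimator_bound
    {p m : ℕ} (Θ : Set (Fin p → ℝ)) (g ghat : (Fin p → ℝ) → (Fin m → ℝ))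
    (θ₀ θhat : Fin p → ℝ) (hθ₀Θ : θ₀ ∈ Θ) (hg₀ : g θ₀ = 0)
    (lam epsn : ℝ) (hlam : 0 < lam) (heps : 0 < epsn)
    (r : ℝ → ℝ) (hr : Monotone r)
    (nl : Seminorm ℝ (Fin p → ℝ))
    -- θ̂ is a minimizer of the ℓ₁ norm over the feasible set
    (hfeasΘ : θhat ∈ Θ) (hfeas : ‖ghat θhat‖ ≤ lam)
    (hmin : ∀ θ ∈ Θ, ‖ghat θ‖ ≤ lam → ∑ j, |θhat j| ≤ ∑ j, |θ j|)
    -- (a) θ₀ is feasible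
    (ha : ‖ghat θ₀‖ ≤ lam)
    -- (b) empirical moment concentration on the restricted set
    (hb : ∀ θ ∈ Θ, (∑ j, |θ j|) ≤ ∑ j, |θ₀ j| → ‖ghat θ - g θ‖ ≤ epsn)
    -- identifiability condition with rate function r
    (hmid : ∀ ε : ℝ, 0 < ε → ∀ θ ∈ Θ, (∑ j, |θ j|) ≤ ∑ j, |θ₀ j| →
        ‖g θ - g θ₀‖ ≤ ε → nl (θ - θ₀) ≤ r ε) :
    nl (θhat - θ₀) ≤ r (lam + epsn) := by
  have hR : ∑ j, |θhat j| ≤ ∑ j, |θ₀ j| := hmin θ₀ hθ₀Θ ha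
  have hconc := hb θhat hfeasΘ hR
  apply hmid (lam + epsn) (by linarith) θhat hfeasΘ hR
  have : ‖g θhat - g θ₀‖ = ‖g θhat‖ := by rw [hg₀, sub_zero]
  rw [this]
  calc ‖g θhat‖ ≤ ‖ghat θhat - g θhat‖ + ‖ghat θhat‖ := by
        have := norm_sub_le (ghat θhat - g θhat) (ghat θhat)
        simpa using this
    _ ≤ lam + epsn := by linarith
end

section
/- Let G be a symmetric positive semidefinite p×p real matrix, let θ₀ ∈ ℝ^p with ‖θ₀‖₁ ≤ K, and let g(θ) = Gθ + g(0) for a fixed vector g(0) ∈ ℝ^p. Then for any θ with ‖θ‖₁ ≤ ‖θ₀‖₁ and ‖g(θ) − g(θ₀)‖_∞ ≤ ε, the Fisher-norm error satisfies ‖θ − θ₀‖_F² := (θ − θ₀)ᵀG(θ − θ₀) ≤ 2Kε. -/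
open Matrix

/-- Dense-model Fisher-norm identifiability (linear case): if `G` is symmetric positive
semidefinite, `‖θ₀‖₁ ≤ K`, `‖θ‖₁ ≤ ‖θ₀‖₁`, and `‖g(θ) − g(θ₀)‖_∞ ≤ ε` for the linear
moment function `g(θ) = Gθ + g(0)`, then `‖θ − θ₀‖_F² = (θ−θ₀)ᵀG(θ−θ₀) ≤ 2Kε`. -/
theorem fisher_norm_dense_bound
    {p : ℕ} (G : Matrix (Fin p) (Fin p) ℝ) (hG : G.PosSemidef)
    (g0 θ₀ θ : Fin p → ℝ) (K ε : ℝ)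
    (hK : ∑ j, |θ₀ j| ≤ K)
    (hθ : ∑ j, |θ j| ≤ ∑ j, |θ₀ j|)
    (hε : ‖(G.mulVec θ + g0) - (G.mulVec θ₀ + g0)‖ ≤ ε) :
    (θ - θ₀) ⬝ᵥ G.mulVec (θ - θ₀) ≤ 2 * K * ε := by
  set δ := θ - θ₀ with hδ
  have hεnn : 0 ≤ ε := le_trans (norm_nonneg _) hε
  have hmv : (G.mulVec θ + g0) - (G.mulVec θ₀ + g0) = G.mulVec δ := by
    rw [hδ, Matrix.mulVec_sub]; abel
  rw [hmv] at hε
  have hbound : ∀ j, |G.mulVec δ j| ≤ ε := fun j =>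
    le_trans (norm_le_pi_norm (G.mulVec δ) j) hε
  have h1 : δ ⬝ᵥ G.mulVec δ ≤ ∑ j, |δ j| * ε := by
    rw [dotProduct]
    apply Finset.sum_le_sum
    intro j _
    calc δ j * G.mulVec δ j ≤ |δ j * G.mulVec δ j| := le_abs_self _
      _ = |δ j| * |G.mulVec δ j| := abs_mul _ _
      _ ≤ |δ j| * ε := mul_le_mul_of_nonneg_left (hbound j) (abs_nonneg _)
  have h2 : ∑ j, |δ j| ≤ 2 * K := by
    calc ∑ j, |δ j| ≤ ∑ j, (|θ j| + |θ₀ j|) := by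
          apply Finset.sum_le_sum; intro j _; exact abs_sub (θ j) (θ₀ j)
      _ = (∑ j, |θ j|) + ∑ j, |θ₀ j| := Finset.sum_add_distrib
      _ ≤ K + K := add_le_add (le_trans hθ hK) hK
      _ = 2 * K := by ring
  calc δ ⬝ᵥ G.mulVec δ ≤ ∑ j, |δ j| * ε := h1
    _ = (∑ j, |δ j|) * ε := (Finset.sum_mul ..).symm
    _ ≤ 2 * K * ε := mul_le_mul_of_nonneg_right h2 hεnn
end

section
/- Let G be a symmetric p×p real matrix, θ₀ ∈ ℝ^p, and define for a norm ℓ the identifiability factor k(θ₀, ℓ) = inf over θ in R(θ₀) = {θ : ‖θ‖₁ ≤ ‖θ₀‖₁} with ‖θ − θ₀‖_ℓ > 0 of ‖G(θ − θ₀)‖_∞ / ‖θ − θ₀‖_ℓ. Define the Fisher seminorm ‖δ‖_F = |δᵀGδ|^{1/2}. Then k(θ₀, F) ≥ k(θ₀, ℓ₁)^{1/2}. -/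
open Matrix

/-- Bounding the Fisher-norm identifiability factor via the `ℓ₁` identifiability factor:
`k(θ₀, F) ≥ k(θ₀, ℓ₁)^{1/2}` for symmetric `G`.  Formally: if `c ≥ 0` is a lower bound
for the ratios `‖G(θ−θ₀)‖_∞ / ‖θ−θ₀‖₁` over the restricted set `{‖θ‖₁ ≤ ‖θ₀‖₁}`, then
`√c` is a lower bound for the ratios `‖G(θ−θ₀)‖_∞ / ‖θ−θ₀‖_F`, where
`‖δ‖_F = |δᵀGδ|^{1/2}`. -/
theorem fisher_identifiability_factor_ge_sqrt_l1
    {p : ℕ} (G : Matrix (Fin p) (Fin p) ℝ) (hG : G.IsSymm)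
    (θ₀ : Fin p → ℝ) (c : ℝ) (hc : 0 ≤ c)
    (hlow : ∀ θ : Fin p → ℝ, (∑ j, |θ j|) ≤ ∑ j, |θ₀ j| →
        c * (∑ j, |θ j - θ₀ j|) ≤ ‖G.mulVec (θ - θ₀)‖) :
    ∀ θ : Fin p → ℝ, (∑ j, |θ j|) ≤ ∑ j, |θ₀ j| →
      Real.sqrt c * Real.sqrt |(θ - θ₀) ⬝ᵥ G.mulVec (θ - θ₀)| ≤ ‖G.mulVec (θ - θ₀)‖ := by
  intro θ hθ
  set δ := θ - θ₀ with hδ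
  set v := G.mulVec δ with hv
  have hvnn : (0:ℝ) ≤ ‖v‖ := norm_nonneg _
  have key : |δ ⬝ᵥ v| ≤ (∑ j, |δ j|) * ‖v‖ := by
    calc |δ ⬝ᵥ v| = |∑ j, δ j * v j| := rfl
      _ ≤ ∑ j, |δ j * v j| := Finset.abs_sum_le_sum_abs _ _
      _ ≤ ∑ j, |δ j| * ‖v‖ := by
          apply Finset.sum_le_sum
          intro j _
          rw [abs_mul]
          have : |v j| ≤ ‖v‖ := by simpa using norm_le_pi_norm v j
          exact mul_le_mul_of_nonneg_left this (abs_nonneg _)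
      _ = (∑ j, |δ j|) * ‖v‖ := by rw [Finset.sum_mul]
  have h1 : c * (∑ j, |δ j|) ≤ ‖v‖ := by
    have := hlow θ hθ
    simpa [hδ, hv] using this
  have h2 : c * |δ ⬝ᵥ v| ≤ ‖v‖ ^ 2 := by
    calc c * |δ ⬝ᵥ v| ≤ c * ((∑ j, |δ j|) * ‖v‖) := by
          exact mul_le_mul_of_nonneg_left key hc
      _ = (c * ∑ j, |δ j|) * ‖v‖ := by ring
      _ ≤ ‖v‖ * ‖v‖ := mul_le_mul_of_nonneg_right h1 hvnn
      _ = ‖v‖ ^ 2 := (sq ‖v‖).symm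
  calc Real.sqrt c * Real.sqrt |δ ⬝ᵥ v| = Real.sqrt (c * |δ ⬝ᵥ v|) :=
        (Real.sqrt_mul hc _).symm
    _ ≤ Real.sqrt (‖v‖ ^ 2) := Real.sqrt_le_sqrt h2
    _ = ‖v‖ := Real.sqrt_sq hvnn
end
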